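/- arXiv:1810.03126 — 5 statements merged into one kernel-verified Lean document; each statement's English description precedes it below -/
import Mathlib

section
/- If R ∈ End(V⊗V) satisfies the braid relation R₁R₂R₁ = R₂R₁R₂ and the Hecke condition (R − qI)(R + q⁻¹I) = 0 with q ≠ 0, ±1, then the current operator R(u,v) = R − ((q−q⁻¹)u/(u−v))·I satisfies the quantum Yang–Baxter equation with parameters: R₁(u,v)R₂(u,w)R₁(v,w) = R₂(v,w)R₁(u,w)R₂(u,v), for pairwise distinct u, v, w. -/
open Matrix BigOperators

noncomputable section

/-- The operator on `n` tensor factors of `ℂ^N` acting as the two-site operator `R`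
at (0-indexed) tensor positions `i, i+1` and as the identity elsewhere
(junk value `0` if `i+1 ≥ n`). -/
def opAt {A : Type} [Ring A] {N n : ℕ}
    (R : Matrix (Fin N × Fin N) (Fin N × Fin N) A) (i : ℕ) :
    Matrix (Fin n → Fin N) (Fin n → Fin N) A :=
  fun f g =>
    if h : i + 1 < n then
      if ∀ j : Fin n, (j : ℕ) ≠ i → (j : ℕ) ≠ i + 1 → f j = g j then
        R (f ⟨i, Nat.lt_of_succ_lt h⟩, f ⟨i + 1, h⟩)
          (g ⟨i, Nat.lt_of_succ_lt h⟩, g ⟨i + 1, h⟩)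
      else 0
    else 0

/-- The operator on `n` tensor factors acting as the one-site matrix `M`
at (0-indexed) position `i` and as the identity elsewhere. -/
def matAt {A : Type} [Ring A] {N n : ℕ}
    (M : Matrix (Fin N) (Fin N) A) (i : ℕ) :
    Matrix (Fin n → Fin N) (Fin n → Fin N) A :=
  fun f g =>
    if h : i < n then
      if ∀ j : Fin n, (j : ℕ) ≠ i → f j = g j then M (f ⟨i, h⟩) (g ⟨i, h⟩) else 0
    else 0

/-- The `q`-number `k_q = (q^k - q^{-k})/(q - q^{-1})`. -/
def qInt (q : ℂ) (k : ℕ) : ℂ := (q ^ k - q⁻¹ ^ k) / (q - q⁻¹)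

/-- The trigonometric (Hecke) Baxterized current operator
`R(u,v) = R - ((q - q⁻¹) u/(u - v)) I`. -/
def trigCur {N : ℕ} (R : Matrix (Fin N × Fin N) (Fin N × Fin N) ℂ) (q u v : ℂ) :
    Matrix (Fin N × Fin N) (Fin N × Fin N) ℂ :=
  R - (((q - q⁻¹) * u) / (u - v)) • 1

/-- The rational Baxterized current operator `R(u,v) = R - (1/(u - v)) I`. -/
def ratCur {N : ℕ} (R : Matrix (Fin N × Fin N) (Fin N × Fin N) ℂ) (u v : ℂ) :
    Matrix (Fin N × Fin N) (Fin N × Fin N) ℂ :=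
  R - ((u - v)⁻¹ : ℂ) • 1

/-- The Hecke skew-symmetrizers `A^{(k)}` starting at (0-indexed) tensor position `s`,
defined by the recursion
`A^{(k+1)} = (k_q/(k+1)_q) A^{(k)} ((q^k/k_q) I - R_{s+k-1}) A^{(k)}`. -/
def skewSym {A : Type} [Ring A] [Algebra ℂ A] {N n : ℕ}
    (R : Matrix (Fin N × Fin N) (Fin N × Fin N) A) (q : ℂ) :
    ℕ → ℕ → Matrix (Fin n → Fin N) (Fin n → Fin N) A
  | 0, _ => 1
  | 1, _ => 1
  | (k + 2), s =>
      (qInt q (k + 1) / qInt q (k + 2)) •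
        (skewSym R q (k + 1) s *
          ((q ^ (k + 1) / qInt q (k + 1)) • (1 : Matrix (Fin n → Fin N) (Fin n → Fin N) A)
            - opAt R (s + k)) *
          skewSym R q (k + 1) s)

/-- The copies `L_{\overline{k+1}} = R_k L_{\overline k} R_k^{-1}` of a one-site matrix `L`
(0-indexed: `lCopy R Rinv L 0 = L₁`). -/
def lCopy {A : Type} [Ring A] {N n : ℕ}
    (R Rinv : Matrix (Fin N × Fin N) (Fin N × Fin N) A)
    (L : Matrix (Fin N) (Fin N) A) : ℕ → Matrix (Fin n → Fin N) (Fin n → Fin N) A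
  | 0 => matAt L 0
  | (k + 1) => opAt R k * lCopy R Rinv L k * opAt Rinv k

/-- The `n`-fold tensor power `C ⊗ ⋯ ⊗ C` of a one-site matrix. -/
def cProd {N n : ℕ} (C : Matrix (Fin N) (Fin N) ℂ) :
    Matrix (Fin n → Fin N) (Fin n → Fin N) ℂ :=
  fun f g => ∏ j, C (f j) (g j)

/-- Two-site tensor square `C ⊗ C`. -/
def cTwo {N : ℕ} (C : Matrix (Fin N) (Fin N) ℂ) :
    Matrix (Fin N × Fin N) (Fin N × Fin N) ℂ :=
  fun a b => C a.1 b.1 * C a.2 b.2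

/-- Weighted partial trace over the second factor: `Tr₍₂₎(C₂ X)`. -/
def ptr2 {N : ℕ} (C : Matrix (Fin N) (Fin N) ℂ)
    (X : Matrix (Fin N × Fin N) (Fin N × Fin N) ℂ) : Matrix (Fin N) (Fin N) ℂ :=
  fun i j => ∑ a, ∑ b, C a b * X (i, b) (j, a)

/-- Lift a complex matrix to a matrix over a `ℂ`-algebra `A`. -/
def lift (A : Type) [Ring A] [Algebra ℂ A] {m : Type} (X : Matrix m m ℂ) : Matrix m m A :=
  X.map (algebraMap ℂ A)
lemma opAt_sub {N n : ℕ} (X Y : Matrix (Fin N × Fin N) (Fin N × Fin N) ℂ) (i : ℕ) :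
    opAt (n := n) (X - Y) i = opAt X i - opAt Y i := by
  funext f g
  simp only [opAt, Matrix.sub_apply]
  split_ifs <;> simp [Matrix.sub_apply]

lemma opAt_smul {N n : ℕ} (c : ℂ) (X : Matrix (Fin N × Fin N) (Fin N × Fin N) ℂ) (i : ℕ) :
    opAt (n := n) (c • X) i = c • opAt X i := by
  funext f g
  simp only [opAt, Matrix.smul_apply]
  split_ifs <;> simp [Matrix.smul_apply]

lemma opAt_one {N n : ℕ} {i : ℕ} (h : i + 1 < n) :
    opAt (n := n) (1 : Matrix (Fin N × Fin N) (Fin N × Fin N) ℂ) i = 1 := by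
  have hi : i < n := Nat.lt_of_succ_lt h
  funext f g
  simp only [opAt, dif_pos h, Matrix.one_apply]
  by_cases hfg : f = g
  · subst hfg
    simp
  · rw [if_neg hfg]
    split_ifs with hc hp
    · exfalso
      apply hfg
      funext j
      by_cases hj0 : (j : ℕ) = i
      · have : j = ⟨i, hi⟩ := Fin.ext hj0
        rw [this]
        exact (Prod.ext_iff.mp hp).1
      · by_cases hj1 : (j : ℕ) = i + 1
        · have : j = ⟨i + 1, h⟩ := Fin.ext hj1
          rw [this]
          exact (Prod.ext_iff.mp hp).2
        · exact hc j hj0 hj1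
    · rfl
    · rfl

lemma opAt_mul {N n : ℕ} (X Y : Matrix (Fin N × Fin N) (Fin N × Fin N) ℂ) {i : ℕ}
    (h : i + 1 < n) :
    opAt (n := n) (X * Y) i = opAt X i * opAt Y i := by
  classical
  have hi : i < n := Nat.lt_of_succ_lt h
  funext f g
  have hne : (⟨i, hi⟩ : Fin n) ≠ ⟨i + 1, h⟩ := by simp [Fin.ext_iff]
  set e : Fin N × Fin N → (Fin n → Fin N) :=
    fun p => Function.update (Function.update f ⟨i, hi⟩ p.1) ⟨i + 1, h⟩ p.2 with he
  have e_off : ∀ (p : Fin N × Fin N) (j : Fin n),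
      (j : ℕ) ≠ i → (j : ℕ) ≠ i + 1 → e p j = f j := by
    intro p j hj0 hj1
    have h0 : j ≠ ⟨i, hi⟩ := by simpa [Fin.ext_iff] using hj0
    have h1 : j ≠ ⟨i + 1, h⟩ := by simpa [Fin.ext_iff] using hj1
    simp [he, Function.update_of_ne h1, Function.update_of_ne h0]
  have e_i0 : ∀ p : Fin N × Fin N, e p ⟨i, hi⟩ = p.1 := by
    intro p; simp [he, Function.update_of_ne hne]
  have e_i1 : ∀ p : Fin N × Fin N, e p ⟨i + 1, h⟩ = p.2 := by
    intro p; simp [he]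
  rw [Matrix.mul_apply]
  symm
  have step1 : ∀ h' : Fin n → Fin N,
      opAt X i f h' * opAt Y i h' g =
        if (∀ j : Fin n, (j : ℕ) ≠ i → (j : ℕ) ≠ i + 1 → f j = h' j) then
          X (f ⟨i, hi⟩, f ⟨i + 1, h⟩) (h' ⟨i, hi⟩, h' ⟨i + 1, h⟩) * opAt Y i h' g
        else 0 := by
    intro h'
    simp only [opAt, dif_pos h]
    rw [ite_mul, zero_mul]
  calc ∑ h', opAt X i f h' * opAt Y i h' g
      = ∑ h', if (∀ j : Fin n, (j : ℕ) ≠ i → (j : ℕ) ≠ i + 1 → f j = h' j) then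
          X (f ⟨i, hi⟩, f ⟨i + 1, h⟩) (h' ⟨i, hi⟩, h' ⟨i + 1, h⟩) * opAt Y i h' g
        else 0 := by
        exact Finset.sum_congr rfl fun h' _ => step1 h'
    _ = ∑ h' ∈ Finset.univ.filter
          (fun h' => ∀ j : Fin n, (j : ℕ) ≠ i → (j : ℕ) ≠ i + 1 → f j = h' j),
          X (f ⟨i, hi⟩, f ⟨i + 1, h⟩) (h' ⟨i, hi⟩, h' ⟨i + 1, h⟩) * opAt Y i h' g := by
        rw [Finset.sum_filter]
    _ = ∑ p : Fin N × Fin N,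
          X (f ⟨i, hi⟩, f ⟨i + 1, h⟩) p * opAt Y i (e p) g := by
        refine Finset.sum_nbij' (fun h' => (h' ⟨i, hi⟩, h' ⟨i + 1, h⟩)) e ?_ ?_ ?_ ?_ ?_
        · intro a _; exact Finset.mem_univ _
        · intro p _
          simp only [Finset.mem_filter, Finset.mem_univ, true_and]
          intro j hj0 hj1
          exact (e_off p j hj0 hj1).symm
        · intro h' hh'
          simp only [Finset.mem_filter, Finset.mem_univ, true_and] at hh'
          funext j
          by_cases hj0 : (j : ℕ) = i
          · have : j = ⟨i, hi⟩ := Fin.ext hj0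
            rw [this, e_i0]
          · by_cases hj1 : (j : ℕ) = i + 1
            · have : j = ⟨i + 1, h⟩ := Fin.ext hj1
              rw [this, e_i1]
            · rw [e_off _ j hj0 hj1, hh' j hj0 hj1]
        · intro p _
          simp [e_i0, e_i1]
        · intro h' hh'
          simp only [Finset.mem_filter, Finset.mem_univ, true_and] at hh'
          have hfh : ∀ j : Fin n, e (h' ⟨i, hi⟩, h' ⟨i + 1, h⟩) j = h' j := by
            intro j
            by_cases hj0 : (j : ℕ) = i
            · have : j = ⟨i, hi⟩ := Fin.ext hj0
              rw [this, e_i0]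
            · by_cases hj1 : (j : ℕ) = i + 1
              · have : j = ⟨i + 1, h⟩ := Fin.ext hj1
                rw [this, e_i1]
              · rw [e_off _ j hj0 hj1, hh' j hj0 hj1]
          congr 1
          exact congrArg (fun x => opAt Y i x g) (funext fun j => (hfh j).symm)
    _ = if (∀ j : Fin n, (j : ℕ) ≠ i → (j : ℕ) ≠ i + 1 → f j = g j) then
          ∑ p : Fin N × Fin N, X (f ⟨i, hi⟩, f ⟨i + 1, h⟩) p * Y p (g ⟨i, hi⟩, g ⟨i + 1, h⟩)
        else 0 := by
        have hY : ∀ p : Fin N × Fin N, opAt Y i (e p) g =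
            if (∀ j : Fin n, (j : ℕ) ≠ i → (j : ℕ) ≠ i + 1 → f j = g j) then
              Y p (g ⟨i, hi⟩, g ⟨i + 1, h⟩)
            else 0 := by
          intro p
          simp only [opAt, dif_pos h, e_i0, e_i1]
          congr 1
          · exact propext ⟨fun hc j hj0 hj1 => (e_off p j hj0 hj1) ▸ hc j hj0 hj1,
              fun hc j hj0 hj1 => (e_off p j hj0 hj1).symm ▸ hc j hj0 hj1⟩
        simp only [hY, mul_ite, mul_zero]
        split_ifs <;> simp
    _ = opAt (n := n) (X * Y) i f g := by
        simp only [opAt, dif_pos h, Matrix.mul_apply]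

lemma opAt_add {N n : ℕ} (X Y : Matrix (Fin N × Fin N) (Fin N × Fin N) ℂ) (i : ℕ) :
    opAt (n := n) (X + Y) i = opAt X i + opAt Y i := by
  funext f g
  simp only [opAt, Matrix.add_apply]
  split_ifs <;> simp [Matrix.add_apply]

/-- Baxterization of a Hecke symmetry satisfies the QYBE with parameters. -/
theorem trig_current_QYBE {N : ℕ} (R : Matrix (Fin N × Fin N) (Fin N × Fin N) ℂ) (q : ℂ)
    (hq0 : q ≠ 0) (hq1 : q ≠ 1) (hqm1 : q ≠ -1)
    (hbraid : opAt (n := 3) R 0 * opAt (n := 3) R 1 * opAt (n := 3) R 0 =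
      opAt (n := 3) R 1 * opAt (n := 3) R 0 * opAt (n := 3) R 1)
    (hHecke : (R - q • 1) * (R + q⁻¹ • 1) = 0)
    (u v w : ℂ) (huv : u ≠ v) (huw : u ≠ w) (hvw : v ≠ w) :
    opAt (n := 3) (trigCur R q u v) 0 * opAt (n := 3) (trigCur R q u w) 1 *
        opAt (n := 3) (trigCur R q v w) 0 =
      opAt (n := 3) (trigCur R q v w) 1 * opAt (n := 3) (trigCur R q u w) 0 *
        opAt (n := 3) (trigCur R q u v) 1 := by
  have h01 : (0 : ℕ) + 1 < 3 := by norm_num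
  have h12 : (1 : ℕ) + 1 < 3 := by norm_num
  have huv' : u - v ≠ 0 := sub_ne_zero.mpr huv
  have huw' : u - w ≠ 0 := sub_ne_zero.mpr huw
  have hvw' : v - w ≠ 0 := sub_ne_zero.mpr hvw
  set κ : ℂ := q - q⁻¹ with hκ
  set a : ℂ := κ * u / (u - v) with ha
  set b : ℂ := κ * u / (u - w) with hb
  set c : ℂ := κ * v / (v - w) with hc
  -- Hecke relation in the form R² = κ R + 1
  have hq : q * q⁻¹ = 1 := mul_inv_cancel₀ hq0
  have hR2 : R * R = κ • R + 1 := by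
    have h := hHecke
    have expand : (R - q • 1) * (R + q⁻¹ • 1) = R * R + (q⁻¹ - q) • R - (q * q⁻¹) • 1 := by
      simp only [mul_add, sub_mul, smul_mul_assoc, mul_smul_comm, one_mul, mul_one, smul_smul]
      module
    rw [expand, hq, one_smul] at h
    rw [← sub_eq_zero, ← h, hκ]
    module
  set r1 : Matrix (Fin 3 → Fin N) (Fin 3 → Fin N) ℂ := opAt R 0 with hr1
  set r2 : Matrix (Fin 3 → Fin N) (Fin 3 → Fin N) ℂ := opAt R 1 with hr2
  have hH1 : r1 * r1 = κ • r1 + 1 := by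
    rw [hr1, ← opAt_mul R R h01, hR2, opAt_add, opAt_smul, opAt_one h01]
  have hH2 : r2 * r2 = κ • r2 + 1 := by
    rw [hr2, ← opAt_mul R R h12, hR2, opAt_add, opAt_smul, opAt_one h12]
  have e1 : opAt (n := 3) (trigCur R q u v) 0 = r1 - a • 1 := by
    rw [trigCur, opAt_sub, opAt_smul, opAt_one h01, hr1, ha, hκ, mul_div_assoc]
  have e2 : opAt (n := 3) (trigCur R q u w) 1 = r2 - b • 1 := by
    rw [trigCur, opAt_sub, opAt_smul, opAt_one h12, hr2, hb, hκ, mul_div_assoc]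
  have e3 : opAt (n := 3) (trigCur R q v w) 0 = r1 - c • 1 := by
    rw [trigCur, opAt_sub, opAt_smul, opAt_one h01, hr1, hc, hκ, mul_div_assoc]
  have e4 : opAt (n := 3) (trigCur R q v w) 1 = r2 - c • 1 := by
    rw [trigCur, opAt_sub, opAt_smul, opAt_one h12, hr2, hc, hκ, mul_div_assoc]
  have e5 : opAt (n := 3) (trigCur R q u w) 0 = r1 - b • 1 := by
    rw [trigCur, opAt_sub, opAt_smul, opAt_one h01, hr1, hb, hκ, mul_div_assoc]
  have e6 : opAt (n := 3) (trigCur R q u v) 1 = r2 - a • 1 := by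
    rw [trigCur, opAt_sub, opAt_smul, opAt_one h12, hr2, ha, hκ, mul_div_assoc]
  rw [e1, e2, e3, e4, e5, e6]
  have hkey : b * c + a * b - b * κ = a * c := by
    rw [ha, hb, hc]
    field_simp
    ring
  -- expand and use braid + Hecke
  simp only [sub_mul, mul_sub, smul_mul_assoc, mul_smul_comm, smul_smul, one_mul, mul_one,
    smul_sub, sub_smul]
  rw [hbraid, hH1, hH2]
  match_scalars <;> first
    | ring1
    | linear_combination hkey
    | linear_combination (-1 : ℂ) * hkey
end
end

section
/- If R ∈ End(V⊗V) satisfies the braid relation and R² = I (involutive symmetry), then the rational current operator R(u,v) = R − (1/(u−v))·I satisfies the quantum Yang–Baxter equation with parameters: R₁(u,v)R₂(u,w)R₁(v,w) = R₂(v,w)R₁(u,w)R₂(u,v), for pairwise distinct u, v, w. -/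
open Matrix BigOperators

noncomputable section

lemma fun3_ext_iff {N : ℕ} (f g : Fin 3 → Fin N) :
    f = g ↔ f 0 = g 0 ∧ f 1 = g 1 ∧ f 2 = g 2 := by
  constructor
  · rintro rfl; exact ⟨rfl, rfl, rfl⟩
  · rintro ⟨h0, h1, h2⟩; funext j; fin_cases j <;> assumption

lemma cond0 {N : ℕ} (f g : Fin 3 → Fin N) :
    (∀ j : Fin 3, (j : ℕ) ≠ 0 → (j : ℕ) ≠ 0 + 1 → f j = g j) ↔ f 2 = g 2 := by
  constructor
  · intro h; exact h 2 (by simp) (by simp)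
  · intro h j; fin_cases j <;> simp_all

lemma cond1 {N : ℕ} (f g : Fin 3 → Fin N) :
    (∀ j : Fin 3, (j : ℕ) ≠ 1 → (j : ℕ) ≠ 1 + 1 → f j = g j) ↔ f 0 = g 0 := by
  constructor
  · intro h; exact h 0 (by simp) (by simp)
  · intro h j; fin_cases j <;> simp_all

def e3 (N : ℕ) : (Fin N × Fin N × Fin N) ≃ (Fin 3 → Fin N) where
  toFun p := ![p.1, p.2.1, p.2.2]
  invFun h := (h 0, h 1, h 2)
  left_inv p := by simp
  right_inv h := by funext j; fin_cases j <;> simp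

lemma opAt0_apply {N : ℕ} (X : Matrix (Fin N × Fin N) (Fin N × Fin N) ℂ)
    (f g : Fin 3 → Fin N) :
    opAt (n := 3) X 0 f g = if f 2 = g 2 then X (f 0, f 1) (g 0, g 1) else 0 := by
  unfold opAt
  rw [dif_pos (by norm_num)]
  rw [if_congr (cond0 f g) rfl rfl]
  rfl

lemma opAt1_apply {N : ℕ} (X : Matrix (Fin N × Fin N) (Fin N × Fin N) ℂ)
    (f g : Fin 3 → Fin N) :
    opAt (n := 3) X 1 f g = if f 0 = g 0 then X (f 1, f 2) (g 1, g 2) else 0 := by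
  unfold opAt
  rw [dif_pos (by norm_num)]
  rw [if_congr (cond1 f g) rfl rfl]
  rfl

lemma opAt_mul0 {N : ℕ} (X Y : Matrix (Fin N × Fin N) (Fin N × Fin N) ℂ) :
    opAt (n := 3) X 0 * opAt (n := 3) Y 0 = opAt (n := 3) (X * Y) 0 := by
  ext f g
  rw [Matrix.mul_apply, ← Equiv.sum_comp (e3 N), opAt0_apply, Matrix.mul_apply]
  simp only [opAt0_apply, e3, Equiv.coe_fn_mk]
  rw [Fintype.sum_prod_type]
  simp only [Matrix.cons_val_zero, Matrix.cons_val_one, Matrix.head_cons,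
    Matrix.cons_val_two, Matrix.tail_cons]
  simp only [Fintype.sum_prod_type]
  rw [Finset.sum_comm]
  simp only [ite_mul, mul_ite, zero_mul, mul_zero, Finset.sum_ite_eq, Finset.sum_ite_eq',
    Finset.mem_univ, if_true]
  split_ifs with h
  · rw [Finset.sum_comm]
  · simp


lemma opAt_mul1 {N : ℕ} (X Y : Matrix (Fin N × Fin N) (Fin N × Fin N) ℂ) :
    opAt (n := 3) X 1 * opAt (n := 3) Y 1 = opAt (n := 3) (X * Y) 1 := by
  ext f g
  rw [Matrix.mul_apply, ← Equiv.sum_comp (e3 N), opAt1_apply, Matrix.mul_apply]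
  simp only [opAt1_apply, e3, Equiv.coe_fn_mk]
  rw [Fintype.sum_prod_type, Finset.sum_comm]
  simp only [Matrix.cons_val_zero, Matrix.cons_val_one, Matrix.head_cons,
    Matrix.cons_val_two, Matrix.tail_cons]
  simp only [ite_mul, mul_ite, zero_mul, mul_zero, Finset.sum_ite_eq, Finset.sum_ite_eq',
    Finset.mem_univ, if_true]
  split_ifs with h
  · rw [Fintype.sum_prod_type]
  · simp

lemma opAt_one0 {N : ℕ} :
    opAt (n := 3) (1 : Matrix (Fin N × Fin N) (Fin N × Fin N) ℂ) 0 = 1 := by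
  ext f g
  rw [opAt0_apply, Matrix.one_apply, Matrix.one_apply]
  by_cases h : f = g
  · subst h; simp
  · rw [if_neg h]
    rw [fun3_ext_iff] at h
    rcases eq_or_ne (f 2) (g 2) with h2 | h2
    · rw [if_pos h2, if_neg (by simp [Prod.ext_iff]; tauto)]
    · rw [if_neg h2]

lemma opAt_one1 {N : ℕ} :
    opAt (n := 3) (1 : Matrix (Fin N × Fin N) (Fin N × Fin N) ℂ) 1 = 1 := by
  ext f g
  rw [opAt1_apply, Matrix.one_apply, Matrix.one_apply]
  by_cases h : f = g
  · subst h; simp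
  · rw [if_neg h]
    rw [fun3_ext_iff] at h
    rcases eq_or_ne (f 0) (g 0) with h0 | h0
    · rw [if_pos h0, if_neg (by simp [Prod.ext_iff]; tauto)]
    · rw [if_neg h0]

lemma opAt_sub_smul {N n : ℕ} (X : Matrix (Fin N × Fin N) (Fin N × Fin N) ℂ) (c : ℂ)
    (i : ℕ) :
    opAt (n := n) (X - c • 1) i = opAt (n := n) X i - c • opAt (n := n) 1 i := by
  ext f g
  simp only [opAt, Matrix.sub_apply, Matrix.smul_apply, smul_eq_mul]
  split_ifs <;> simp

lemma key_ring {A : Type} [Ring A] [Algebra ℂ A] (a b : A)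
    (ha : a * a = 1) (hb : b * b = 1) (hab : a * b * a = b * a * b)
    (α β γ : ℂ) (hs : β * α + β * γ = α * γ) :
    (a - α • 1) * (b - β • 1) * (a - γ • 1) =
      (b - γ • 1) * (a - β • 1) * (b - α • 1) := by
  simp only [sub_mul, mul_sub, smul_mul_assoc, mul_smul_comm, smul_smul, one_mul, mul_one,
    smul_sub, ha, hb, hab]
  match_scalars
  any_goals ring
  · exact hs
  · linear_combination -hs

/-- Baxterization of an involutive symmetry satisfies the QYBE with parameters. -/
theorem rat_current_QYBE {N : ℕ} (R : Matrix (Fin N × Fin N) (Fin N × Fin N) ℂ)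
    (hbraid : opAt (n := 3) R 0 * opAt (n := 3) R 1 * opAt (n := 3) R 0 =
      opAt (n := 3) R 1 * opAt (n := 3) R 0 * opAt (n := 3) R 1)
    (hinv : R * R = 1)
    (u v w : ℂ) (huv : u ≠ v) (huw : u ≠ w) (hvw : v ≠ w) :
    opAt (n := 3) (ratCur R u v) 0 * opAt (n := 3) (ratCur R u w) 1 *
        opAt (n := 3) (ratCur R v w) 0 =
      opAt (n := 3) (ratCur R v w) 1 * opAt (n := 3) (ratCur R u w) 0 *
        opAt (n := 3) (ratCur R u v) 1 := by
  have ha : opAt (n := 3) R 0 * opAt (n := 3) R 0 = 1 := by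
    rw [opAt_mul0, hinv, opAt_one0]
  have hb : opAt (n := 3) R 1 * opAt (n := 3) R 1 = 1 := by
    rw [opAt_mul1, hinv, opAt_one1]
  have hs : (u - w)⁻¹ * (u - v)⁻¹ + (u - w)⁻¹ * (v - w)⁻¹ = (u - v)⁻¹ * (v - w)⁻¹ := by
    have h1 : u - v ≠ 0 := sub_ne_zero.mpr huv
    have h2 : u - w ≠ 0 := sub_ne_zero.mpr huw
    have h3 : v - w ≠ 0 := sub_ne_zero.mpr hvw
    field_simp
    ring
  have e1 : ∀ x y : ℂ, opAt (n := 3) (ratCur R x y) 0 =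
      opAt (n := 3) R 0 - ((x - y)⁻¹ : ℂ) • 1 := by
    intro x y
    rw [ratCur, opAt_sub_smul, opAt_one0]
  have e2 : ∀ x y : ℂ, opAt (n := 3) (ratCur R x y) 1 =
      opAt (n := 3) R 1 - ((x - y)⁻¹ : ℂ) • 1 := by
    intro x y
    rw [ratCur, opAt_sub_smul, opAt_one1]
  simp only [e1, e2]
  exact key_ring _ _ ha hb hbraid _ _ _ hs
end
end

section
/- Let R be a braiding (satisfying the braid relation) and suppose there exists an N×N matrix C such that RₖCₖCₖ₊₁ = CₖCₖ₊₁Rₖ. Define the R-trace of X ∈ End(V⊗ᵏ) by Tr_{R(1…k)}X = Tr_{(1…k)}(C₁C₂⋯Cₖ·X). Then the cyclic property holds: Tr_{R(1…k)}(f(R₁,…,Rₖ₋₁)·X) = Tr_{R(1…k)}(X·f(R₁,…,Rₖ₋₁)) for any polynomial f in the operators R₁,…,Rₖ₋₁. -/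
open Matrix BigOperators

noncomputable section

/-!
Cut `V^{⊗n}` as `V^{⊗2} ⊗ V^{⊗(n-2)}` at the sites `i, i+1`: then `Rᵢ` becomes `R ⊗ 1` and
`C^{⊗n}` becomes `(C ⊗ C) ⊗ C^{⊗(n-2)}`, so `R (C ⊗ C) = (C ⊗ C) R` makes `C^{⊗n}` commute with
every `Rᵢ`, hence with the whole ring they generate. For such `F`,
`Tr(C^{⊗n} F X) = Tr(F C^{⊗n} X) = Tr(C^{⊗n} X F)` by cyclicity of the ordinary trace.
-/

open scoped Kronecker

def Equiv.piSplitPair {ι α : Type*} [DecidableEq ι] {a b : ι} (hab : a ≠ b) :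
    (ι → α) ≃ (α × α) × ({j // j ≠ a ∧ j ≠ b} → α) where
  toFun f := ((f a, f b), fun j => f j)
  invFun x j := if ha : j = a then x.1.1 else if hb : j = b then x.1.2 else x.2 ⟨j, ha, hb⟩
  left_inv f := by
    funext j
    by_cases ha : j = a
    · subst ha; simp
    · by_cases hb : j = b
      · subst hb; simp [ha]
      · simp [ha, hb]
  right_inv x := by
    obtain ⟨⟨p, q⟩, r⟩ := x
    simp only [dite_true, hab.symm, dite_false, Prod.mk.injEq, true_and]
    funext j
    simp [j.2.1, j.2.2]

theorem Fintype.prod_eq_mul_mul_prod_subtype_ne_ne {ι M : Type*} [Fintype ι] [DecidableEq ι]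
    [CommMonoid M] {a b : ι} (hab : a ≠ b) (f : ι → M) :
    ∏ j, f j = f a * f b * ∏ j : {j // j ≠ a ∧ j ≠ b}, f j := by
  rw [← Finset.prod_mul_prod_compl {a, b}, Finset.prod_pair hab,
    ← Finset.prod_subtype ({a, b}ᶜ : Finset ι) (p := fun j => j ≠ a ∧ j ≠ b) (by simp)]

def Matrix.piKronecker {ι α R : Type*} [Fintype ι] [CommMonoid R] (C : Matrix α α R) :
    Matrix (ι → α) (ι → α) R :=
  Matrix.of fun f g => ∏ j, C (f j) (g j)

theorem Matrix.piKronecker_eq_submatrix_kronecker {ι α R : Type*} [Fintype ι] [DecidableEq ι]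
    [CommMonoid R] {a b : ι} (hab : a ≠ b) (C : Matrix α α R) :
    piKronecker (ι := ι) C =
      ((C ⊗ₖ C) ⊗ₖ piKronecker C).submatrix (Equiv.piSplitPair hab) (Equiv.piSplitPair hab) := by
  ext f g
  simp [piKronecker, Equiv.piSplitPair, Fintype.prod_eq_mul_mul_prod_subtype_ne_ne hab]

theorem cProd_eq_piKronecker {N n : ℕ} (C : Matrix (Fin N) (Fin N) ℂ) :
    cProd (n := n) C = Matrix.piKronecker C :=
  rfl

theorem cTwo_eq_kronecker {N : ℕ} (C : Matrix (Fin N) (Fin N) ℂ) : cTwo C = C ⊗ₖ C :=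
  rfl

theorem Fin.mk_ne_mk_add_one {n i : ℕ} (hi : i + 1 < n) :
    (⟨i, Nat.lt_of_succ_lt hi⟩ : Fin n) ≠ ⟨i + 1, hi⟩ := by
  simp

theorem opAt_eq_submatrix_kronecker {N n i : ℕ} (hi : i + 1 < n)
    (R : Matrix (Fin N × Fin N) (Fin N × Fin N) ℂ) :
    opAt (n := n) R i =
      (R ⊗ₖ (1 : Matrix _ _ ℂ)).submatrix (Equiv.piSplitPair (Fin.mk_ne_mk_add_one hi))
        (Equiv.piSplitPair (Fin.mk_ne_mk_add_one hi)) := by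
  ext f g
  simp [opAt, hi, Equiv.piSplitPair, Matrix.one_apply, funext_iff, Fin.ext_iff]

theorem cProd_commute_opAt {N n : ℕ} {R : Matrix (Fin N × Fin N) (Fin N × Fin N) ℂ}
    {C : Matrix (Fin N) (Fin N) ℂ} (hRC : R * cTwo C = cTwo C * R) {i : ℕ} (hi : i + 1 < n) :
    Commute (cProd (n := n) C) (opAt R i) := by
  rw [cTwo_eq_kronecker] at hRC
  rw [Commute, SemiconjBy, cProd_eq_piKronecker, opAt_eq_submatrix_kronecker hi,
    Matrix.piKronecker_eq_submatrix_kronecker (Fin.mk_ne_mk_add_one hi),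
    Matrix.submatrix_mul_equiv, Matrix.submatrix_mul_equiv, ← Matrix.mul_kronecker_mul,
    ← Matrix.mul_kronecker_mul, ← hRC, mul_one, one_mul]

theorem commute_of_mem_subringClosure {R : Type*} [Ring R] {s : Set R} {a x : R}
    (ha : ∀ y ∈ s, Commute a y) (hx : x ∈ Subring.closure s) : Commute a x :=
  Subring.mem_centralizer_iff.mp (Subring.closure_le_centralizer_centralizer s hx) a
    (Subring.mem_centralizer_iff.mpr fun y hy => (ha y hy).symm)

theorem Matrix.trace_mul_mul_comm_of_commute {m R : Type*} [Fintype m] [CommSemiring R]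
    {C F : Matrix m m R} (hCF : Commute C F) (X : Matrix m m R) :
    trace (C * (F * X)) = trace (C * (X * F)) := by
  rw [← mul_assoc, hCF.eq, mul_assoc, trace_mul_comm, mul_assoc]

theorem rTrace_cyclic_general {N n : ℕ}
    (R : Matrix (Fin N × Fin N) (Fin N × Fin N) ℂ) (C : Matrix (Fin N) (Fin N) ℂ)
    (hRC : R * cTwo C = cTwo C * R)
    (F : Matrix (Fin n → Fin N) (Fin n → Fin N) ℂ)
    (hF : F ∈ Subring.closure
      {M : Matrix (Fin n → Fin N) (Fin n → Fin N) ℂ | ∃ i : ℕ, i + 1 < n ∧ M = opAt R i})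
    (X : Matrix (Fin n → Fin N) (Fin n → Fin N) ℂ) :
    Matrix.trace (cProd (n := n) C * (F * X)) =
      Matrix.trace (cProd (n := n) C * (X * F)) := by
  refine Matrix.trace_mul_mul_comm_of_commute (commute_of_mem_subringClosure ?_ hF) X
  rintro _ ⟨i, hi, rfl⟩
  exact cProd_commute_opAt hRC hi

/-- the cyclic property of the `R`-trace
`Tr_{R(1…k)} X = Tr(C₁⋯Cₖ X)`: for any `F` in the subring generated by the
operators `R₁,…,R_{k-1}`, `Tr_{R(1…k)}(F X) = Tr_{R(1…k)}(X F)`. -/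
theorem rTrace_cyclic {N n : ℕ}
    (R : Matrix (Fin N × Fin N) (Fin N × Fin N) ℂ) (C : Matrix (Fin N) (Fin N) ℂ)
    (hbraid : opAt (n := 3) R 0 * opAt (n := 3) R 1 * opAt (n := 3) R 0 =
      opAt (n := 3) R 1 * opAt (n := 3) R 0 * opAt (n := 3) R 1)
    (hRC : R * cTwo C = cTwo C * R)
    (F : Matrix (Fin n → Fin N) (Fin n → Fin N) ℂ)
    (hF : F ∈ Subring.closure
      {M : Matrix (Fin n → Fin N) (Fin n → Fin N) ℂ | ∃ i : ℕ, i + 1 < n ∧ M = opAt R i})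
    (X : Matrix (Fin n → Fin N) (Fin n → Fin N) ℂ) :
    Matrix.trace (cProd (n := n) C * (F * X)) =
      Matrix.trace (cProd (n := n) C * (X * F)) :=
  rTrace_cyclic_general R C hRC F hF X
end
end

section
/- Let R be an invertible braiding and A⁽ᵖ⁾ the Hecke skew-symmetrizers. Then the skew-symmetrizer shifts through a chain of R-matrices: A⁽ᵖ⁾_{k+1,…,k+p} · Rₖ Rₖ₊₁ ⋯ R_{k+p−1} = Rₖ Rₖ₊₁ ⋯ R_{k+p−1} · A⁽ᵖ⁾_{k,…,k+p−1}. -/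
open Matrix BigOperators

noncomputable section

lemma opAt_swap_far {N n : ℕ} (R S : Matrix (Fin N × Fin N) (Fin N × Fin N) ℂ)
    {i j : ℕ} (hij : i + 2 ≤ j) :
    opAt (n := n) R i * opAt (n := n) S j = opAt (n := n) S j * opAt (n := n) R i := by
  ext f g
  by_cases hi : i + 1 < n
  · by_cases hj : j + 1 < n
    · have hij1 : i ≠ j := by omega
      have hij2 : i ≠ j + 1 := by omega
      have hij3 : i + 1 ≠ j := by omega
      have hij4 : i + 1 ≠ j + 1 := by omega
      simp only [Matrix.mul_apply, opAt, dif_pos hi, dif_pos hj]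
      rw [Finset.sum_eq_single (fun x : Fin n => if (x:ℕ) = i ∨ (x:ℕ) = i+1 then g x else f x),
          Finset.sum_eq_single (fun x : Fin n => if (x:ℕ) = j ∨ (x:ℕ) = j+1 then g x else f x)]
      · -- main equality
        set Q : Prop := ∀ x : Fin n, (x:ℕ) ≠ i → (x:ℕ) ≠ i+1 → (x:ℕ) ≠ j → (x:ℕ) ≠ j+1 →
            f x = g x with hQdef
        have c1 : (∀ x : Fin n, (x:ℕ) ≠ i → (x:ℕ) ≠ i + 1 →
            f x = (fun x : Fin n => if (x:ℕ) = i ∨ (x:ℕ) = i+1 then g x else f x) x) := by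
          intro x h1 h2; simp [h1, h2]
        have c2 : (∀ x : Fin n, (x:ℕ) ≠ j → (x:ℕ) ≠ j + 1 →
            f x = (fun x : Fin n => if (x:ℕ) = j ∨ (x:ℕ) = j+1 then g x else f x) x) := by
          intro x h1 h2; simp [h1, h2]
        rw [if_pos c1, if_pos c2]
        by_cases hQ : Q
        · have d1 : (∀ x : Fin n, (x:ℕ) ≠ j → (x:ℕ) ≠ j + 1 →
              (fun x : Fin n => if (x:ℕ) = i ∨ (x:ℕ) = i+1 then g x else f x) x = g x) := by
            intro x h1 h2
            by_cases hx : (x:ℕ) = i ∨ (x:ℕ) = i+1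
            · simp [hx]
            · push_neg at hx
              simp [hx.1, hx.2, hQ x hx.1 hx.2 h1 h2]
          have d2 : (∀ x : Fin n, (x:ℕ) ≠ i → (x:ℕ) ≠ i + 1 →
              (fun x : Fin n => if (x:ℕ) = j ∨ (x:ℕ) = j+1 then g x else f x) x = g x) := by
            intro x h1 h2
            by_cases hx : (x:ℕ) = j ∨ (x:ℕ) = j+1
            · simp [hx]
            · push_neg at hx
              simp [hx.1, hx.2, hQ x h1 h2 hx.1 hx.2]
          rw [if_pos d1, if_pos d2]
          simp only [hij1, hij2, hij3, hij4, Ne.symm hij1, Ne.symm hij2, Ne.symm hij3,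
            Ne.symm hij4, or_self, if_neg, if_pos, Or.inl rfl]
          simp [hij1, hij2, hij3, hij4, Ne.symm hij1, Ne.symm hij3]
          ring
        · have d1 : ¬ (∀ x : Fin n, (x:ℕ) ≠ j → (x:ℕ) ≠ j + 1 →
              (fun x : Fin n => if (x:ℕ) = i ∨ (x:ℕ) = i+1 then g x else f x) x = g x) := by
            intro hcon
            apply hQ
            intro x h1 h2 h3 h4
            have := hcon x h3 h4
            simpa [h1, h2] using this
          have d2 : ¬ (∀ x : Fin n, (x:ℕ) ≠ i → (x:ℕ) ≠ i + 1 →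
              (fun x : Fin n => if (x:ℕ) = j ∨ (x:ℕ) = j+1 then g x else f x) x = g x) := by
            intro hcon
            apply hQ
            intro x h1 h2 h3 h4
            have := hcon x h1 h2
            simpa [h3, h4] using this
          rw [if_neg d1, if_neg d2, mul_zero, mul_zero]
      · -- vanishing of other terms, RHS sum
        intro b _ hb
        obtain ⟨x, hx⟩ := Function.ne_iff.mp hb
        by_cases hxi : (x:ℕ) = j ∨ (x:ℕ) = j+1
        · have hbg : b x ≠ g x := by
            intro h; apply hx; simp [hxi, h]
          apply mul_eq_zero_of_right
          rw [if_neg]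
          intro hcon
          rcases hxi with h | h
          · exact hbg (hcon x (by omega) (by omega))
          · exact hbg (hcon x (by omega) (by omega))
        · push_neg at hxi
          have hfb : f x ≠ b x := by
            intro h; apply hx; simp [hxi.1, hxi.2, ← h]
          apply mul_eq_zero_of_left
          rw [if_neg]
          intro hcon
          exact hfb (hcon x hxi.1 hxi.2)
      · intro h; exact absurd (Finset.mem_univ _) h
      · -- vanishing of other terms, LHS sum
        intro b _ hb
        obtain ⟨x, hx⟩ := Function.ne_iff.mp hb
        by_cases hxi : (x:ℕ) = i ∨ (x:ℕ) = i+1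
        · have hbg : b x ≠ g x := by
            intro h; apply hx; simp [hxi, h]
          apply mul_eq_zero_of_right
          rw [if_neg]
          intro hcon
          rcases hxi with h | h
          · exact hbg (hcon x (by omega) (by omega))
          · exact hbg (hcon x (by omega) (by omega))
        · push_neg at hxi
          have hfb : f x ≠ b x := by
            intro h; apply hx; simp [hxi.1, hxi.2, ← h]
          apply mul_eq_zero_of_left
          rw [if_neg]
          intro hcon
          exact hfb (hcon x hxi.1 hxi.2)
      · intro h; exact absurd (Finset.mem_univ _) h
    · simp [Matrix.mul_apply, opAt, hj]
  · simp [Matrix.mul_apply, opAt, hi]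

lemma opAt_shift_chain {N n : ℕ} (R : Matrix (Fin N × Fin N) (Fin N × Fin N) ℂ)
    (hbraid : ∀ i : ℕ, opAt (n := n) R i * opAt (n := n) R (i + 1) * opAt (n := n) R i =
      opAt (n := n) R (i + 1) * opAt (n := n) R i * opAt (n := n) R (i + 1))
    (s p t : ℕ) (ht : t + 1 < p) :
    opAt (n := n) R (s + t + 1) *
        ((List.range p).map (fun j => opAt (n := n) R (s + j))).prod =
      ((List.range p).map (fun j => opAt (n := n) R (s + j))).prod *
        opAt (n := n) R (s + t) := by
  obtain ⟨m, rfl⟩ : ∃ m, p = (t + 2) + m := ⟨p - (t + 2), by omega⟩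
  rw [List.range_add, List.range_succ, List.range_succ]
  have hcommA : Commute (opAt (n := n) R (s + t + 1))
      (((List.range t).map (fun j => opAt (n := n) R (s + j))).prod) := by
    apply Commute.list_prod_right
    intro y hy
    simp only [List.mem_map, List.mem_range] at hy
    obtain ⟨x, hx, rfl⟩ := hy
    exact ((opAt_swap_far R R (show (s + x) + 2 ≤ s + t + 1 by omega)).symm :
      opAt (n := n) R (s + t + 1) * opAt (n := n) R (s + x) =
        opAt (n := n) R (s + x) * opAt (n := n) R (s + t + 1))
  have hcommB : Commute (opAt (n := n) R (s + t))
      (((List.range m).map (fun x => opAt (n := n) R (s + (t + 2 + x)))).prod) := by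
    apply Commute.list_prod_right
    intro y hy
    simp only [List.mem_map, List.mem_range] at hy
    obtain ⟨x, hx, rfl⟩ := hy
    exact (opAt_swap_far R R (show (s + t) + 2 ≤ s + (t + 2 + x) by omega) :
      opAt (n := n) R (s + t) * opAt (n := n) R (s + (t + 2 + x)) =
        opAt (n := n) R (s + (t + 2 + x)) * opAt (n := n) R (s + t))
  simp only [List.map_append, List.map_map, List.prod_append, List.map_singleton,
    List.prod_singleton, Function.comp]
  set A := ((List.range t).map (fun j => opAt (n := n) R (s + j))).prod with hA
  set B := ((List.range m).map (fun x => opAt (n := n) R (s + (t + 2 + x)))).prod with hB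
  set X := opAt (n := n) R (s + t + 1) with hX
  set Y := opAt (n := n) R (s + t) with hY
  have hbr : Y * X * Y = X * Y * X := hbraid (s + t)
  calc X * (A * Y * X * B) = A * (X * Y * X) * B := by
        rw [← mul_assoc, ← mul_assoc, ← mul_assoc, hcommA.eq]
        simp [mul_assoc]
      _ = A * (Y * X * Y) * B := by rw [hbr]
      _ = A * Y * X * (Y * B) := by simp [mul_assoc]
      _ = A * Y * X * (B * Y) := by rw [hcommB.eq]
      _ = A * Y * X * B * Y := by simp [mul_assoc]

/-- the skew-symmetrizer shifts through a chain of `R`-matrices: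
`A⁽ᵖ⁾_{k+1,…,k+p} R_k R_{k+1} ⋯ R_{k+p-1} = R_k R_{k+1} ⋯ R_{k+p-1} A⁽ᵖ⁾_{k,…,k+p-1}`
(0-indexed: `s = k - 1`, `skewSym R q p s` acts on factors `s, …, s+p-1`). -/
theorem skewSym_shift_through_chain {N n : ℕ}
    (R : Matrix (Fin N × Fin N) (Fin N × Fin N) ℂ) (q : ℂ)
    (hq0 : q ≠ 0) (hq : ∀ k : ℕ, 0 < k → q ^ k ≠ 1)
    (hbraid : ∀ i : ℕ, opAt (n := n) R i * opAt (n := n) R (i + 1) * opAt (n := n) R i =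
      opAt (n := n) R (i + 1) * opAt (n := n) R i * opAt (n := n) R (i + 1))
    (hHecke : (R - q • 1) * (R + q⁻¹ • 1) = 0)
    (s p : ℕ) (hn : s + p + 1 ≤ n) :
    skewSym (n := n) R q p (s + 1) *
        ((List.range p).map (fun j => opAt (n := n) R (s + j))).prod =
      ((List.range p).map (fun j => opAt (n := n) R (s + j))).prod *
        skewSym (n := n) R q p s := by
  set C := ((List.range p).map (fun j => opAt (n := n) R (s + j))).prod with hC
  suffices h : ∀ k, k ≤ p → skewSym (n := n) R q k (s + 1) * C = C * skewSym (n := n) R q k s by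
    exact h p le_rfl
  intro k
  induction k using Nat.twoStepInduction with
  | zero => intro _; simp [skewSym]
  | one => intro _; simp [skewSym]
  | more k ih1 ih2 =>
    intro hk
    have ihS := ih2 (by omega)
    have hop : opAt (n := n) R (s + k + 1) * C = C * opAt (n := n) R (s + k) :=
      opAt_shift_chain R hbraid s p k (by omega)
    have hidx : s + 1 + k = s + k + 1 := by omega
    simp only [skewSym, hidx]
    rw [smul_mul_assoc, mul_smul_comm]
    congr 1
    set S1 := skewSym (n := n) R q (k + 1) (s + 1)
    set S0 := skewSym (n := n) R q (k + 1) s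
    set d := (q ^ (k + 1) / qInt q (k + 1))
    have hD : (d • (1 : Matrix (Fin n → Fin N) (Fin n → Fin N) ℂ) - opAt (n := n) R (s + k + 1)) * C
        = C * (d • 1 - opAt (n := n) R (s + k)) := by
      rw [sub_mul, mul_sub, smul_mul_assoc, mul_smul_comm, one_mul, mul_one, hop]
    calc S1 * (d • 1 - opAt (n := n) R (s + k + 1)) * S1 * C
        = S1 * ((d • 1 - opAt (n := n) R (s + k + 1)) * (S1 * C)) := by simp [mul_assoc]
      _ = S1 * ((d • 1 - opAt (n := n) R (s + k + 1)) * (C * S0)) := by rw [ihS]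
      _ = S1 * (((d • 1 - opAt (n := n) R (s + k + 1)) * C) * S0) := by simp [mul_assoc]
      _ = S1 * ((C * (d • 1 - opAt (n := n) R (s + k))) * S0) := by rw [hD]
      _ = (S1 * C) * ((d • 1 - opAt (n := n) R (s + k)) * S0) := by simp [mul_assoc]
      _ = (C * S0) * ((d • 1 - opAt (n := n) R (s + k)) * S0) := by rw [ihS]
      _ = C * (S0 * (d • 1 - opAt (n := n) R (s + k)) * S0) := by simp [mul_assoc]
end
end

section
/- Let R ∈ End(V⊗V) be an involutive symmetry (braid relation, R² = I) and let M(1),…,M(K) be matrices satisfying the braided relations M(k)_{1̄}M(l)_{2̄} = M(l)_{2̄}M(k)_{1̄} for k ≠ l and M(k)_{1̄}M(k)_{2̄} − M(k)_{2̄}M(k)_{1̄} = M(k)_{1̄}R − M(k)_{2̄}R, where X_{1̄} = X₁ and X_{2̄} = R X₁ R⁻¹. Then for pairwise distinct u₁,…,u_K, the matrix L̃(u) = Σₖ M(k)/(u−uₖ) satisfies the braided Sklyanin relation [L̃_{1̄}(u), L̃_{2̄}(v)] = [R/(u−v), L̃_{1̄}(u) + L̃_{2̄}(v)]. -/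
open Matrix BigOperators

noncomputable section

/-- The flip (permutation) operator `P` on `ℂ^N ⊗ ℂ^N`. -/
def flipP (N : ℕ) : Matrix (Fin N × Fin N) (Fin N × Fin N) ℂ :=
  fun a b => if a.1 = b.2 ∧ a.2 = b.1 then 1 else 0

/-- `M₁ = M ⊗ I`: embedding into the first factor of `Mat_N ⊗ Mat_N`. -/
def emb1 {A : Type} [Ring A] {N : ℕ} (M : Matrix (Fin N) (Fin N) A) :
    Matrix (Fin N × Fin N) (Fin N × Fin N) A :=
  fun a b => if a.2 = b.2 then M a.1 b.1 else 0

/-- `M₂ = I ⊗ M`: embedding into the second factor of `Mat_N ⊗ Mat_N`. -/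
def emb2 {A : Type} [Ring A] {N : ℕ} (M : Matrix (Fin N) (Fin N) A) :
    Matrix (Fin N × Fin N) (Fin N × Fin N) A :=
  fun a b => if a.1 = b.1 then M a.2 b.2 else 0

lemma emb1_sum_smul {A : Type} [Ring A] [Algebra ℂ A] {N K : ℕ}
    (c : Fin K → ℂ) (M : Fin K → Matrix (Fin N) (Fin N) A) :
    emb1 (∑ k, c k • M k) = ∑ k, c k • emb1 (M k) := by
  ext a b
  simp only [emb1, Matrix.sum_apply, Matrix.smul_apply]
  split_ifs with h
  · simp [Matrix.sum_apply, Matrix.smul_apply]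
  · simp

lemma abstract_sklyanin {B : Type} [Ring B] [Algebra ℂ B] {K : ℕ}
    (r : B) (hRR : r * r = 1)
    (e : Fin K → B) (a b : Fin K → ℂ) (w : ℂ)
    (hcomm : ∀ k l, k ≠ l → e k * (r * e l * r) = (r * e l * r) * e k)
    (hgl : ∀ k, e k * (r * e k * r) - (r * e k * r) * e k
        = e k * r - (r * e k * r) * r)
    (hsc : ∀ k, w * (a k - b k) = -(a k * b k)) :
    (∑ k, a k • e k) * (r * (∑ k, b k • e k) * r)
      - (r * (∑ k, b k • e k) * r) * (∑ k, a k • e k)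
    = (w • r) * ((∑ k, a k • e k) + r * (∑ k, b k • e k) * r)
      - ((∑ k, a k • e k) + r * (∑ k, b k • e k) * r) * (w • r) := by
  have hT : r * (∑ k, b k • e k) * r = ∑ k, b k • (r * e k * r) := by
    simp [Finset.mul_sum, Finset.sum_mul, mul_smul_comm, smul_mul_assoc]
  have hfr : ∀ k, (r * e k * r) * r = r * e k := by
    intro k; rw [mul_assoc, hRR, mul_one]
  have hrf : ∀ k, r * (r * e k * r) = e k * r := by
    intro k; rw [← mul_assoc, ← mul_assoc, hRR, one_mul]
  rw [hT]
  have hgl' : ∀ k, e k * (r * e k * r) - (r * e k * r) * e k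
      = e k * r - r * e k := by
    intro k; rw [hgl k, hfr k]
  have hL : (∑ k, a k • e k) * (∑ k, b k • (r * e k * r))
      - (∑ k, b k • (r * e k * r)) * (∑ k, a k • e k)
      = ∑ k, (a k * b k) • (e k * r - r * e k) := by
    have swap : (∑ k, ∑ l, (b k • (r * e k * r)) * (a l • e l))
        = ∑ k, ∑ l, (b l • (r * e l * r)) * (a k • e k) := Finset.sum_comm
    rw [Finset.sum_mul_sum, Finset.sum_mul_sum, swap, ← Finset.sum_sub_distrib]
    refine Finset.sum_congr rfl fun k _ => ?_
    rw [← Finset.sum_sub_distrib, Finset.sum_eq_single k]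
    · rw [smul_mul_smul_comm, smul_mul_smul_comm, mul_comm (b k) (a k),
        ← smul_sub, hgl' k]
    · intro l _ hl
      rw [smul_mul_smul_comm, smul_mul_smul_comm, hcomm k l (Ne.symm hl),
        mul_comm (b l) (a k), sub_self]
    · intro h; exact absurd (Finset.mem_univ k) h
  have hR : (w • r) * ((∑ k, a k • e k) + ∑ k, b k • (r * e k * r))
      - ((∑ k, a k • e k) + ∑ k, b k • (r * e k * r)) * (w • r)
      = ∑ k, (a k * b k) • (e k * r - r * e k) := by
    rw [mul_add, add_mul, Finset.mul_sum, Finset.mul_sum, Finset.sum_mul,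
      Finset.sum_mul, ← Finset.sum_add_distrib, ← Finset.sum_add_distrib,
      ← Finset.sum_sub_distrib]
    refine Finset.sum_congr rfl fun k _ => ?_
    rw [smul_mul_smul_comm, smul_mul_smul_comm, smul_mul_smul_comm,
      smul_mul_smul_comm, hrf k, hfr k, mul_comm (a k) w, mul_comm (b k) w]
    rw [show w * a k = w * b k - a k * b k by linear_combination hsc k]
    module
  rw [hL, hR]

/-- braided version. If `R` is an involutive symmetry
(`X_{2̄} = R X₁ R⁻¹ = R X₁ R`) and the `M(k)` satisfy the braided relations
`M(k)_{1̄}M(l)_{2̄} = M(l)_{2̄}M(k)_{1̄}` (`k ≠ l`) and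
`M(k)_{1̄}M(k)_{2̄} - M(k)_{2̄}M(k)_{1̄} = M(k)_{1̄}R - M(k)_{2̄}R`, then
`L̃(u) = Σₖ M(k)/(u - uₖ)` satisfies the braided Sklyanin relation
`[L̃_{1̄}(u), L̃_{2̄}(v)] = [R/(u-v), L̃_{1̄}(u) + L̃_{2̄}(v)]`. -/
theorem braided_gaudin_lax_sklyanin {A : Type} [Ring A] [Algebra ℂ A] {N K : ℕ}
    (R : Matrix (Fin N × Fin N) (Fin N × Fin N) ℂ)
    (hbraid : opAt (n := 3) R 0 * opAt (n := 3) R 1 * opAt (n := 3) R 0 =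
      opAt (n := 3) R 1 * opAt (n := 3) R 0 * opAt (n := 3) R 1)
    (hinv : R * R = 1)
    (M : Fin K → Matrix (Fin N) (Fin N) A) (uu : Fin K → ℂ)
    (hdist : Function.Injective uu)
    (hcomm : ∀ k l : Fin K, k ≠ l →
      emb1 (M k) * (lift A R * emb1 (M l) * lift A R) =
        (lift A R * emb1 (M l) * lift A R) * emb1 (M k))
    (hgl : ∀ k : Fin K,
      emb1 (M k) * (lift A R * emb1 (M k) * lift A R) -
          (lift A R * emb1 (M k) * lift A R) * emb1 (M k) =
        emb1 (M k) * lift A R - (lift A R * emb1 (M k) * lift A R) * lift A R)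
    (u v : ℂ) (huv : u ≠ v) (hu : ∀ k, u ≠ uu k) (hv : ∀ k, v ≠ uu k) :
    emb1 (∑ k, (u - uu k)⁻¹ • M k) *
          (lift A R * emb1 (∑ k, (v - uu k)⁻¹ • M k) * lift A R) -
        (lift A R * emb1 (∑ k, (v - uu k)⁻¹ • M k) * lift A R) *
          emb1 (∑ k, (u - uu k)⁻¹ • M k) =
      ((u - v)⁻¹ • lift A R) *
          (emb1 (∑ k, (u - uu k)⁻¹ • M k) +
            lift A R * emb1 (∑ k, (v - uu k)⁻¹ • M k) * lift A R) -
        (emb1 (∑ k, (u - uu k)⁻¹ • M k) +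
            lift A R * emb1 (∑ k, (v - uu k)⁻¹ • M k) * lift A R) *
          ((u - v)⁻¹ • lift A R) := by
  have hRR : lift A R * lift A R = 1 := by
    rw [lift, ← Matrix.map_mul, hinv, Matrix.map_one _ (map_zero _) (map_one _)]
  have hsc : ∀ k : Fin K,
      (u - v)⁻¹ * ((u - uu k)⁻¹ - (v - uu k)⁻¹) = -((u - uu k)⁻¹ * (v - uu k)⁻¹) := by
    intro k
    have h1 : u - v ≠ 0 := sub_ne_zero.mpr huv
    have h2 : u - uu k ≠ 0 := sub_ne_zero.mpr (hu k)
    have h3 : v - uu k ≠ 0 := sub_ne_zero.mpr (hv k)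
    field_simp
    ring
  rw [emb1_sum_smul, emb1_sum_smul]
  exact abstract_sklyanin (lift A R) hRR (fun k => emb1 (M k))
    (fun k => (u - uu k)⁻¹) (fun k => (v - uu k)⁻¹) (u - v)⁻¹
    (fun k l hkl => hcomm k l hkl) hgl hsc
end
end
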